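/- arXiv:1304.6344 — 4 statements merged into one kernel-verified Lean document; each statement's English description precedes it below -/
import Mathlib

section
/- Let p > 4, τ < 0, and ℓ > 0 with |τ|·ℓ < 2^{1-p/2}/4. Then for any real L ≥ 0 and N_c ≥ 1 satisfying L ≤ 2ℓ + 2ℓN_c, one has τ·L + 2^{1-p/2}·N_c ≥ 2^{1-p/2}·(L/(4ℓ))·(1 - 4·2^{p/2-1}|τ|ℓ) > 0 whenever L > 0. -/
/-!
Write `a = 2^{1-p/2}` and `b = 2^{p/2-1}`, so that `a b = 1`. Then the right-hand side equals
`a L/(4ℓ) + τ L`, and the estimate reduces to `L/(4ℓ) ≤ N_c`, which follows from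
`L ≤ 2ℓ + 2ℓ N_c ≤ 4ℓ N_c`. Positivity is `4 b |τ| ℓ < a b = 1`.
-/

lemma Real.rpow_one_sub_mul_rpow_sub_one {x : ℝ} (hx : 0 < x) (y : ℝ) :
    x ^ (1 - y) * x ^ (y - 1) = 1 := by
  rw [← Real.rpow_add hx, sub_add_sub_cancel', sub_self, Real.rpow_zero]

lemma div_four_mul_le_of_le_two_mul_add {ℓ L N : ℝ} (hℓ : 0 < ℓ) (hN : 1 ≤ N)
    (hL : L ≤ 2 * ℓ + 2 * ℓ * N) : L / (4 * ℓ) ≤ N := by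
  rw [div_le_iff₀ (by positivity)]
  nlinarith

lemma mul_div_mul_one_sub_eq_add {a b τ ℓ L : ℝ} (hab : a * b = 1) (hτ : τ < 0) (hℓ : 0 < ℓ) :
    a * (L / (4 * ℓ)) * (1 - 4 * b * |τ| * ℓ) = a * (L / (4 * ℓ)) + τ * L := by
  rw [abs_of_neg hτ]
  field_simp
  linear_combination 4 * τ * ℓ * L * hab

lemma le_mul_add_of_mul_eq_one {a b τ ℓ L N : ℝ} (hab : a * b = 1) (ha : 0 ≤ a) (hτ : τ < 0)
    (hℓ : 0 < ℓ) (hLN : L / (4 * ℓ) ≤ N) :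
    a * (L / (4 * ℓ)) * (1 - 4 * b * |τ| * ℓ) ≤ τ * L + a * N := by
  rw [mul_div_mul_one_sub_eq_add hab hτ hℓ, add_comm]
  gcongr

lemma one_sub_four_mul_pos_of_mul_eq_one {a b τ ℓ : ℝ} (hab : a * b = 1) (hb : 0 < b)
    (hsmall : |τ| * ℓ < a / 4) : 0 < 1 - 4 * b * |τ| * ℓ := by
  nlinarith

theorem stmt_8_general (p τ ℓ : ℝ) (hτ : τ < 0) (hℓ : 0 < ℓ)
    (hsmall : |τ| * ℓ < (2 : ℝ) ^ (1 - p / 2) / 4)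
    (L Nc : ℝ) (hN : 1 ≤ Nc) (hbound : L ≤ 2 * ℓ + 2 * ℓ * Nc) :
    τ * L + (2 : ℝ) ^ (1 - p / 2) * Nc
        ≥ (2 : ℝ) ^ (1 - p / 2) * (L / (4 * ℓ)) * (1 - 4 * (2 : ℝ) ^ (p / 2 - 1) * |τ| * ℓ)
    ∧ (0 < L →
        0 < (2 : ℝ) ^ (1 - p / 2) * (L / (4 * ℓ)) * (1 - 4 * (2 : ℝ) ^ (p / 2 - 1) * |τ| * ℓ)) := by
  have hab := Real.rpow_one_sub_mul_rpow_sub_one two_pos (p / 2)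
  have ha : 0 < (2 : ℝ) ^ (1 - p / 2) := by positivity
  have hfactor := one_sub_four_mul_pos_of_mul_eq_one hab (by positivity) hsmall
  refine ⟨le_mul_add_of_mul_eq_one hab ha.le hτ hℓ
    (div_four_mul_le_of_le_two_mul_add hℓ hN hbound), fun hL => ?_⟩
  positivity

/-- Corner-positivity estimate in two dimensions: for `p > 4`, `τ < 0`,
`0 < ℓ` with `|τ|ℓ < 2^{1-p/2}/4`, and any `L ≥ 0`, `N_c ≥ 1` with
`L ≤ 2ℓ + 2ℓ N_c`, one has
`τL + 2^{1-p/2} N_c ≥ 2^{1-p/2} (L/(4ℓ)) (1 - 4·2^{p/2-1}|τ|ℓ)`, and the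
right-hand side is positive whenever `L > 0`. -/
theorem stmt_8 (p τ ℓ : ℝ) (hp : 4 < p) (hτ : τ < 0) (hℓ : 0 < ℓ)
    (hsmall : |τ| * ℓ < (2 : ℝ) ^ (1 - p / 2) / 4)
    (L Nc : ℝ) (hL : 0 ≤ L) (hN : 1 ≤ Nc) (hbound : L ≤ 2 * ℓ + 2 * ℓ * Nc) :
    τ * L + (2 : ℝ) ^ (1 - p / 2) * Nc
        ≥ (2 : ℝ) ^ (1 - p / 2) * (L / (4 * ℓ)) * (1 - 4 * (2 : ℝ) ^ (p / 2 - 1) * |τ| * ℓ)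
    ∧ (0 < L →
        0 < (2 : ℝ) ^ (1 - p / 2) * (L / (4 * ℓ)) * (1 - 4 * (2 : ℝ) ^ (p / 2 - 1) * |τ| * ℓ)) :=
  stmt_8_general p τ ℓ hτ hℓ hsmall L Nc hN hbound
end

section
/- For p > 4 and integers h, ℓ with 1 ≤ h ≤ ℓ, define A_ℓ(h) = -8·Σ_{-h < x₁ ≤ 0} Σ_{-ℓ < x₂ ≤ 0} Σ_{y₁ ≥ 1} Σ_{y₂ ≥ 1} ((x₁-y₁)² + (x₂-y₂)²)^{-p/2}. Then there exists a constant C > 0 depending only on p such that |A_ℓ(h) + κ| ≤ C·h^{4-p}, where κ = 8·Σ_{x₁ ≤ 0} Σ_{x₂ ≤ 0} Σ_{y₁ ≥ 1} Σ_{y₂ ≥ 1} ((x₁-y₁)² + (x₂-y₂)²)^{-p/2}. -/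
/-!
Removing the stripe from the corner leaves the interactions of the quadrant sites with
`x₁ ≤ -h` or `x₂ ≤ -ℓ`. Since `u² + v² ≥ (u + v)² / 2`, each of these two tails is dominated by
a fourfold lattice sum `∑ (B + n₁ + n₂ + m₁ + m₂)^(-p)` with `B ≥ h`, and summing out one
variable at a time (by comparison with `∫ x^(-r)`) lowers the exponent by one, which leaves
`O(B^(4-p))`.
-/

open Real
open scoped ENNReal

namespace StripeCorner

lemma sum_range_rpow_neg_le {r B : ℝ} (hr : 1 < r) (hB : 0 < B) (N : ℕ) :
    ∑ i ∈ Finset.range N, (B + ↑(i + 1)) ^ (-r) ≤ B ^ (1 - r) / (r - 1) := by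
  have hanti : AntitoneOn (fun x : ℝ => x ^ (-r)) (Set.Icc B (B + N)) :=
    (antitoneOn_rpow_Ioi_of_exponent_nonpos (by linarith)).mono
      fun x hx => lt_of_lt_of_le hB hx.1
  have hint : ∫ x in B..B + N, x ^ (-r) = (B ^ (1 - r) - (B + N) ^ (1 - r)) / (r - 1) := by
    have h0 : (0 : ℝ) ∉ Set.uIcc B (B + N) := by
      rw [Set.uIcc_of_le (by simp)]
      exact fun h => hB.not_ge h.1
    rw [integral_rpow (Or.inr ⟨by linarith, h0⟩), show -r + 1 = 1 - r by ring, ← neg_div_neg_eq,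
      neg_sub, neg_sub]
  calc ∑ i ∈ Finset.range N, (B + ↑(i + 1)) ^ (-r) ≤ ∫ x in B..B + N, x ^ (-r) :=
        hanti.sum_le_integral
    _ ≤ B ^ (1 - r) / (r - 1) := by
        rw [hint]
        exact div_le_div_of_nonneg_right (sub_le_self _ (by positivity)) (by linarith)

lemma tsum_ofReal_rpow_neg_le {r B K : ℝ} (hr : 1 < r) (hB : 1 ≤ B) (hK : 0 ≤ K) :
    ∑' n : ℕ, ENNReal.ofReal (K * (B + n) ^ (-r)) ≤
      ENNReal.ofReal (K * (r / (r - 1)) * B ^ (-(r - 1))) := by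
  have hB0 : 0 < B := by linarith
  have htail : ∑' n : ℕ, ENNReal.ofReal (K * (B + ↑(n + 1)) ^ (-r)) ≤
      ENNReal.ofReal (K * (B ^ (1 - r) / (r - 1))) := by
    refine ENNReal.tsum_le_of_sum_range_le fun N => ?_
    rw [← ENNReal.ofReal_sum_of_nonneg fun i _ => by positivity, ← Finset.mul_sum]
    exact ENNReal.ofReal_le_ofReal
      (mul_le_mul_of_nonneg_left (sum_range_rpow_neg_le hr hB0 N) hK)
  have hfirst : B ^ (-r) ≤ B ^ (1 - r) := rpow_le_rpow_of_exponent_le hB (by linarith)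
  calc ∑' n : ℕ, ENNReal.ofReal (K * (B + n) ^ (-r))
      = ENNReal.ofReal (K * B ^ (-r)) +
          ∑' n : ℕ, ENNReal.ofReal (K * (B + ↑(n + 1)) ^ (-r)) := by
        rw [tsum_eq_zero_add' ENNReal.summable, Nat.cast_zero, add_zero]
    _ ≤ ENNReal.ofReal (K * B ^ (1 - r)) + ENNReal.ofReal (K * (B ^ (1 - r) / (r - 1))) := by
        gcongr
    _ = ENNReal.ofReal (K * (r / (r - 1)) * B ^ (-(r - 1))) := by
        have hr1 : r - 1 ≠ 0 := by linarith
        rw [← ENNReal.ofReal_add (by positivity) (by positivity), neg_sub]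
        congr 1
        field_simp
        ring

lemma tsum4_ofReal_rpow_neg_le {r B K : ℝ} (hr : 4 < r) (hB : 1 ≤ B) (hK : 0 ≤ K) :
    ∑' (a : ℕ) (b : ℕ) (c : ℕ) (d : ℕ), ENNReal.ofReal (K * (B + a + b + c + d) ^ (-r)) ≤
      ENNReal.ofReal (K * (r / (r - 4)) * B ^ (4 - r)) := by
  have hB' : ∀ {B' : ℝ} (n : ℕ), 1 ≤ B' → 1 ≤ B' + n := fun n h => by
    linarith [(Nat.cast_nonneg n : (0:ℝ) ≤ n)]
  have hK₁ : 0 ≤ K * (r / (r - 1)) := mul_nonneg hK (div_nonneg (by linarith) (by linarith))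
  have hK₂ : 0 ≤ K * (r / (r - 1)) * ((r - 1) / (r - 1 - 1)) :=
    mul_nonneg hK₁ (div_nonneg (by linarith) (by linarith))
  have hK₃ : 0 ≤ K * (r / (r - 1)) * ((r - 1) / (r - 1 - 1)) *
      ((r - 1 - 1) / (r - 1 - 1 - 1)) :=
    mul_nonneg hK₂ (div_nonneg (by linarith) (by linarith))
  calc ∑' (a : ℕ) (b : ℕ) (c : ℕ) (d : ℕ), ENNReal.ofReal (K * (B + a + b + c + d) ^ (-r))
      ≤ ∑' (a : ℕ) (b : ℕ) (c : ℕ),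
          ENNReal.ofReal (K * (r / (r - 1)) * (B + a + b + c) ^ (-(r - 1))) := by
        gcongr with a b c
        exact tsum_ofReal_rpow_neg_le (by linarith) (hB' c (hB' b (hB' a hB))) hK
    _ ≤ ∑' (a : ℕ) (b : ℕ), ENNReal.ofReal (K * (r / (r - 1)) * ((r - 1) / (r - 1 - 1)) *
          (B + a + b) ^ (-(r - 1 - 1))) := by
        gcongr with a b
        exact tsum_ofReal_rpow_neg_le (by linarith) (hB' b (hB' a hB)) hK₁
    _ ≤ ∑' a : ℕ, ENNReal.ofReal (K * (r / (r - 1)) * ((r - 1) / (r - 1 - 1)) *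
          ((r - 1 - 1) / (r - 1 - 1 - 1)) * (B + a) ^ (-(r - 1 - 1 - 1))) := by
        gcongr with a
        exact tsum_ofReal_rpow_neg_le (by linarith) (hB' a hB) hK₂
    _ ≤ ENNReal.ofReal (K * (r / (r - 1)) * ((r - 1) / (r - 1 - 1)) *
          ((r - 1 - 1) / (r - 1 - 1 - 1)) * ((r - 1 - 1 - 1) / (r - 1 - 1 - 1 - 1)) *
          B ^ (-(r - 1 - 1 - 1 - 1))) :=
        tsum_ofReal_rpow_neg_le (by linarith) hB hK₃
    _ = ENNReal.ofReal (K * (r / (r - 4)) * B ^ (4 - r)) := by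
        have : r - 1 ≠ 0 := by linarith
        have : r - 1 - 1 ≠ 0 := by linarith
        have : r - 1 - 1 - 1 ≠ 0 := by linarith
        congr 1
        rw [show -(r - 1 - 1 - 1 - 1) = 4 - r by ring, show r - 1 - 1 - 1 - 1 = r - 4 by ring]
        field_simp

lemma one_div_rpow_sq_add_sq_le {p u v : ℝ} (hp : 0 ≤ p) (hu : 0 < u) (hv : 0 < v) :
    1 / (u ^ 2 + v ^ 2) ^ (p / 2) ≤ 2 ^ (p / 2) * (u + v) ^ (-p) := by
  have hsq : (u + v) ^ 2 ≤ 2 * (u ^ 2 + v ^ 2) := by nlinarith [sq_nonneg (u - v)]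
  have hpow : (u + v) ^ p ≤ 2 ^ (p / 2) * (u ^ 2 + v ^ 2) ^ (p / 2) := by
    calc (u + v) ^ p = ((u + v) ^ 2) ^ (p / 2) := by
          rw [← rpow_natCast, ← rpow_mul (by positivity)]; ring_nf
      _ ≤ (2 * (u ^ 2 + v ^ 2)) ^ (p / 2) := by gcongr
      _ = 2 ^ (p / 2) * (u ^ 2 + v ^ 2) ^ (p / 2) := mul_rpow (by norm_num) (by positivity)
  rw [rpow_neg (by positivity), ← div_eq_mul_inv, div_le_div_iff₀ (by positivity) (by positivity)]
  simpa using hpow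

def natEquivNonpos : ℕ ≃ {x : ℤ // x ≤ 0} where
  toFun n := ⟨-n, by omega⟩
  invFun x := (-x.1).toNat
  left_inv n := by simp
  right_inv x := Subtype.ext (by have := x.2; simp only [Int.ofNat_toNat]; omega)

def natEquivPos : ℕ ≃ {y : ℤ // 1 ≤ y} where
  toFun n := ⟨n + 1, by omega⟩
  invFun y := (y.1 - 1).toNat
  left_inv n := by simp
  right_inv y := Subtype.ext (by have := y.2; simp only [Int.pred_toNat]; omega)

lemma tsum_nonpos_eq_sum_add_tsum (f : ℤ → ℝ≥0∞) (k : ℕ) :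
    ∑' x : {x : ℤ // x ≤ 0}, f x =
      ∑ x ∈ Finset.Ioc (-(k : ℤ)) 0, f x + ∑' n : ℕ, f (-↑(k + n)) := by
  have hfin : ∑ n ∈ Finset.range k, f (-n) = ∑ x ∈ Finset.Ioc (-(k : ℤ)) 0, f x :=
    Finset.sum_nbij' (fun n => -(n : ℤ)) (fun x => (-x).toNat) (by simp)
      (by simp only [Finset.mem_Ioc, Finset.mem_range, and_imp]; omega) (by simp)
      (by simp only [Finset.mem_Ioc, Int.ofNat_toNat, and_imp]; omega) (by simp)
  rw [← natEquivNonpos.tsum_eq, ← hfin, ← ENNReal.summable.sum_add_tsum_nat_add' (k := k)]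
  simp [natEquivNonpos, add_comm]

lemma tsum_nonpos_eq (f : ℤ → ℝ≥0∞) : ∑' x : {x : ℤ // x ≤ 0}, f x = ∑' n : ℕ, f (-n) :=
  (natEquivNonpos.tsum_eq _).symm

lemma tsum_pos_eq (f : ℤ → ℝ≥0∞) : ∑' y : {y : ℤ // 1 ≤ y}, f y = ∑' n : ℕ, f (n + 1) :=
  (natEquivPos.tsum_eq _).symm

lemma sum_Ioc_le_tsum_nonpos (f : ℤ → ℝ≥0∞) (k : ℕ) :
    ∑ x ∈ Finset.Ioc (-(k : ℤ)) 0, f x ≤ ∑' x : {x : ℤ // x ≤ 0}, f x :=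
  (tsum_nonpos_eq_sum_add_tsum f k).symm ▸ le_self_add

-- Energies take values in `ℝ≥0∞`, so lattice sums can be split and reordered before their
-- finiteness is known.
noncomputable def pairEnergy (p : ℝ) (x₁ x₂ y₁ y₂ : ℤ) : ℝ≥0∞ :=
  ENNReal.ofReal (1 / (((x₁ : ℝ) - y₁) ^ 2 + ((x₂ : ℝ) - y₂) ^ 2) ^ (p / 2))

noncomputable def columnEnergy (p : ℝ) (x₁ x₂ : ℤ) : ℝ≥0∞ :=
  ∑' y : {y : ℤ // 1 ≤ y} × {y : ℤ // 1 ≤ y}, pairEnergy p x₁ x₂ y.1 y.2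

noncomputable def stripeEnergy (p : ℝ) (h ℓ : ℕ) : ℝ≥0∞ :=
  ∑ x₁ ∈ Finset.Ioc (-(h : ℤ)) 0, ∑ x₂ ∈ Finset.Ioc (-(ℓ : ℤ)) 0, columnEnergy p x₁ x₂

noncomputable def cornerEnergy (p : ℝ) : ℝ≥0∞ :=
  ∑' q : {x : ℤ // x ≤ 0} × {x : ℤ // x ≤ 0} × {y : ℤ // 1 ≤ y} × {y : ℤ // 1 ≤ y},
    pairEnergy p q.1 q.2.1 q.2.2.1 q.2.2.2

noncomputable def tailConst (p : ℝ) : ℝ := 2 ^ (p / 2) * (p / (p - 4))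

lemma tailConst_pos {p : ℝ} (hp : 4 < p) : 0 < tailConst p :=
  mul_pos (by positivity) (div_pos (by linarith) (by linarith))

noncomputable def tailEnergy (p : ℝ) (k₁ k₂ : ℕ) : ℝ≥0∞ :=
  ∑' (n₁ : ℕ) (n₂ : ℕ), columnEnergy p (-↑(k₁ + n₁)) (-↑(k₂ + n₂))

lemma cornerEnergy_eq_tsum_columnEnergy (p : ℝ) :
    cornerEnergy p =
      ∑' (x₁ : {x : ℤ // x ≤ 0}) (x₂ : {x : ℤ // x ≤ 0}), columnEnergy p x₁ x₂ := by
  simp only [cornerEnergy, columnEnergy, ENNReal.tsum_prod']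

lemma columnEnergy_eq_tsum_nat (p : ℝ) (x₁ x₂ : ℤ) :
    columnEnergy p x₁ x₂ = ∑' (m₁ : ℕ) (m₂ : ℕ), pairEnergy p x₁ x₂ (m₁ + 1) (m₂ + 1) := by
  rw [columnEnergy,
    ENNReal.tsum_prod (f := fun y₁ y₂ : {y : ℤ // 1 ≤ y} => pairEnergy p x₁ x₂ y₁ y₂),
    tsum_pos_eq fun y₁ => ∑' y₂ : {y : ℤ // 1 ≤ y}, pairEnergy p x₁ x₂ y₁ y₂]
  simp only [tsum_pos_eq]

lemma tailEnergy_le {p : ℝ} (hp : 4 < p) (k₁ k₂ : ℕ) :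
    tailEnergy p k₁ k₂ ≤ ENNReal.ofReal (tailConst p * (k₁ + k₂ + 2) ^ (4 - p)) := by
  refine le_trans ?_ (tsum4_ofReal_rpow_neg_le hp (by norm_cast; omega) (by positivity))
  simp only [tailEnergy, columnEnergy_eq_tsum_nat]
  gcongr with n₁ n₂ m₁ m₂
  have hu : (0 : ℝ) < k₁ + n₁ + m₁ + 1 := by positivity
  have hv : (0 : ℝ) < k₂ + n₂ + m₂ + 1 := by positivity
  rw [pairEnergy]
  push_cast
  refine ENNReal.ofReal_le_ofReal (Eq.trans_le ?_
    ((one_div_rpow_sq_add_sq_le (by linarith) hu hv).trans_eq ?_)) <;> ring_nf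

lemma stripeEnergy_le_cornerEnergy (p : ℝ) (h ℓ : ℕ) : stripeEnergy p h ℓ ≤ cornerEnergy p := by
  rw [stripeEnergy, cornerEnergy_eq_tsum_columnEnergy]
  calc _ ≤ ∑ x₁ ∈ Finset.Ioc (-(h : ℤ)) 0, ∑' x₂ : {x : ℤ // x ≤ 0}, columnEnergy p x₁ x₂ := by
        gcongr with x₁
        exact sum_Ioc_le_tsum_nonpos _ ℓ
    _ ≤ _ := sum_Ioc_le_tsum_nonpos (fun x₁ => ∑' x₂ : {x : ℤ // x ≤ 0}, columnEnergy p x₁ x₂) h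

lemma cornerEnergy_le_stripeEnergy_add_tailEnergy (p : ℝ) (h ℓ : ℕ) :
    cornerEnergy p ≤ stripeEnergy p h ℓ + tailEnergy p 0 ℓ + tailEnergy p h 0 := by
  rw [cornerEnergy_eq_tsum_columnEnergy,
    tsum_nonpos_eq_sum_add_tsum (fun x₁ => ∑' x₂ : {x : ℤ // x ≤ 0}, columnEnergy p x₁ x₂) h]
  refine add_le_add ?_ (by simp only [tailEnergy, tsum_nonpos_eq, zero_add, le_refl])
  simp only [tsum_nonpos_eq_sum_add_tsum _ ℓ, Finset.sum_add_distrib, stripeEnergy]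
  gcongr
  refine (sum_Ioc_le_tsum_nonpos _ h).trans_eq ?_
  simp only [tailEnergy, zero_add]
  exact (tsum_nonpos_eq fun x₁ => ∑' n₂ : ℕ, columnEnergy p x₁ (-↑(ℓ + n₂)) :)

lemma cornerEnergy_eq_tailEnergy (p : ℝ) : cornerEnergy p = tailEnergy p 0 0 := by
  simp only [cornerEnergy_eq_tsum_columnEnergy, tailEnergy, zero_add, tsum_nonpos_eq]
  exact (tsum_nonpos_eq fun x₁ => ∑' n₂ : ℕ, columnEnergy p x₁ (-n₂) :)

lemma cornerEnergy_sub_stripeEnergy_le {p : ℝ} (hp : 4 < p) {h ℓ : ℕ} (hh : 0 < h)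
    (hhℓ : h ≤ ℓ) : cornerEnergy p - stripeEnergy p h ℓ ≤
      ENNReal.ofReal (2 * tailConst p * h ^ (4 - p)) := by
  have hC : 0 ≤ tailConst p * h ^ (4 - p) := mul_nonneg (tailConst_pos hp).le (by positivity)
  have htail : ∀ k₁ k₂ : ℕ, h ≤ k₁ + k₂ →
      tailEnergy p k₁ k₂ ≤ ENNReal.ofReal (tailConst p * h ^ (4 - p)) :=
    fun k₁ k₂ hk => (tailEnergy_le hp k₁ k₂).trans <| ENNReal.ofReal_le_ofReal <|
      mul_le_mul_of_nonneg_left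
        (rpow_le_rpow_of_nonpos (by positivity) (by norm_cast; omega) (by linarith))
        (tailConst_pos hp).le
  rw [tsub_le_iff_left]
  calc cornerEnergy p ≤ stripeEnergy p h ℓ + tailEnergy p 0 ℓ + tailEnergy p h 0 :=
        cornerEnergy_le_stripeEnergy_add_tailEnergy p h ℓ
    _ ≤ stripeEnergy p h ℓ + ENNReal.ofReal (tailConst p * h ^ (4 - p)) +
          ENNReal.ofReal (tailConst p * h ^ (4 - p)) := by
        gcongr <;> exact htail _ _ (by omega)
    _ = _ := by
        rw [add_assoc, ← ENNReal.ofReal_add hC hC]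
        ring_nf

lemma toReal_tsum_ofReal {α : Type*} {f : α → ℝ} (hf : ∀ a, 0 ≤ f a) :
    (∑' a, ENNReal.ofReal (f a)).toReal = ∑' a, f a := by
  rw [ENNReal.tsum_toReal_eq fun _ => ENNReal.ofReal_ne_top]
  exact tsum_congr fun a => ENNReal.toReal_ofReal (hf a)

lemma stripeEnergy_toReal {p : ℝ} {h ℓ : ℕ} (hfin : stripeEnergy p h ℓ ≠ ⊤) :
    (stripeEnergy p h ℓ).toReal =
      ∑ x₁ ∈ Finset.Ioc (-(h : ℤ)) 0, ∑ x₂ ∈ Finset.Ioc (-(ℓ : ℤ)) 0,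
        ∑' y : {y : ℤ // 1 ≤ y} × {y : ℤ // 1 ≤ y},
          1 / (((x₁ : ℝ) - (y.1 : ℤ)) ^ 2 + ((x₂ : ℝ) - (y.2 : ℤ)) ^ 2) ^ (p / 2) := by
  rw [stripeEnergy, ENNReal.toReal_sum fun x₁ hx₁ => ENNReal.sum_ne_top.mp hfin x₁ hx₁]
  refine Finset.sum_congr rfl fun x₁ hx₁ => ?_
  rw [ENNReal.toReal_sum fun x₂ hx₂ =>
    ENNReal.sum_ne_top.mp (ENNReal.sum_ne_top.mp hfin x₁ hx₁) x₂ hx₂]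
  exact Finset.sum_congr rfl fun x₂ _ => toReal_tsum_ofReal fun _ => by positivity

lemma mul_cornerEnergy_toReal (p c : ℝ) : c * (cornerEnergy p).toReal =
    ∑' q : {x : ℤ // x ≤ 0} × {x : ℤ // x ≤ 0} × {y : ℤ // 1 ≤ y} × {y : ℤ // 1 ≤ y},
      c / ((((q.1 : ℤ) : ℝ) - (q.2.2.1 : ℤ)) ^ 2 +
        (((q.2.1 : ℤ) : ℝ) - (q.2.2.2 : ℤ)) ^ 2) ^ (p / 2) := by
  simp only [cornerEnergy, pairEnergy]
  rw [toReal_tsum_ofReal fun _ => by positivity, ← tsum_mul_left]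
  simp only [mul_one_div]

end StripeCorner

open StripeCorner

/-- For `p > 4` there is `C > 0` (depending only on `p`) such that for all integers
`1 ≤ h ≤ ℓ`, the stripe/quadrant interaction
`A_ℓ(h) = -8 ∑_{-h<x₁≤0} ∑_{-ℓ<x₂≤0} ∑_{y₁≥1} ∑_{y₂≥1} ((x₁-y₁)²+(x₂-y₂)²)^{-p/2}`
satisfies `|A_ℓ(h) + κ| ≤ C h^{4-p}`, where `κ` is the full corner energy. -/
theorem stmt_13 (p : ℝ) (hp : 4 < p) :
    ∃ C : ℝ, 0 < C ∧ ∀ h ℓ : ℤ, 1 ≤ h → h ≤ ℓ →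
      |(-8 * ∑ x₁ ∈ Finset.Ioc (-h) 0, ∑ x₂ ∈ Finset.Ioc (-ℓ) 0,
          ∑' y : {y : ℤ // 1 ≤ y} × {y : ℤ // 1 ≤ y},
            1 / (((x₁ - (y.1 : ℤ) : ℝ) ^ 2 + (x₂ - (y.2 : ℤ) : ℝ) ^ 2) ^ (p / 2)))
        + ∑' q : {x : ℤ // x ≤ 0} × {x : ℤ // x ≤ 0} × {y : ℤ // 1 ≤ y} × {y : ℤ // 1 ≤ y},
            8 / ((((q.1 : ℤ) - (q.2.2.1 : ℤ) : ℝ) ^ 2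
              + ((q.2.1 : ℤ) - (q.2.2.2 : ℤ) : ℝ) ^ 2) ^ (p / 2))|
        ≤ C * (h : ℝ) ^ ((4 : ℝ) - p) := by
  have hC := tailConst_pos hp
  refine ⟨8 * (2 * tailConst p), by positivity, fun h ℓ hh hhℓ => ?_⟩
  lift h to ℕ using by omega
  lift ℓ to ℕ using by omega
  have hcorner : cornerEnergy p ≠ ⊤ :=
    (cornerEnergy_eq_tailEnergy p ▸ tailEnergy_le hp 0 0).trans_lt ENNReal.ofReal_lt_top |>.ne
  have hle := stripeEnergy_le_cornerEnergy p h ℓ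
  rw [← stripeEnergy_toReal (ne_top_of_le_ne_top hcorner hle), ← mul_cornerEnergy_toReal,
    show ∀ a b : ℝ, -8 * a + 8 * b = 8 * (b - a) from fun _ _ => by ring,
    ← ENNReal.toReal_sub_of_le hle hcorner, abs_of_nonneg (by positivity), Int.cast_natCast,
    mul_assoc]
  gcongr
  exact ENNReal.toReal_le_of_le_ofReal (by positivity)
    (cornerEnergy_sub_stripeEnergy_le hp (by omega) (by omega))
end

section
/- Let δ ⊂ ℤ² be finite and nonempty, p > 4. Then the self-energy U(δ) = -Σ_{n ∈ ℤ², n≠0} 𝒩_n(δ)/|n|^p, where 𝒩_n(δ) is the number of ordered pairs (x,y), x ∈ δ, y ∉ δ, with y - x ∈ {±n}, satisfies U(δ) ≥ -2·J_c·|Γ(δ)|, where |Γ(δ)| is the total number of nearest-neighbor bonds of ℤ² joining a point of δ to a point of its complement, and J_c = Σ_{n₁ > 0, n₂ ∈ ℤ} n₁/(n₁² + n₂²)^{p/2}. -/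
/-!
Let `N(a)` be the number of points of `δ` that translation by `a` moves out of `δ`. If `x + a + b`
leaves `δ`, then either `x + a` leaves `δ` or `x + a` is a point of `δ` that `b` moves out, so `N`
is subadditive; since also `N(-a) = N(a)`, writing `n = n₁ e₁ + n₂ e₂` gives
`𝒩_n(δ) ≤ 2 N(n) ≤ 2 (|n₁| N(e₁) + |n₂| N(e₂))`, and `2 N(e₁) + 2 N(e₂) = |Γ(δ)|`.
Dividing by `|n|^p` and summing, `∑_{n ≠ 0} |nᵢ| / |n|^p = 2 J_c` for `i = 1, 2`
(split `ℤ²` according to the sign of `nᵢ`) yields `-U(δ) ≤ 2 J_c |Γ(δ)|`.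
-/

open Finset

section escapeCount

variable {G : Type*} [AddCommGroup G] [DecidableEq G]

def escapeCount (δ : Finset G) (a : G) : ℕ := #{x ∈ δ | x + a ∉ δ}

@[simp]
lemma escapeCount_zero (δ : Finset G) : escapeCount δ 0 = 0 := by
  simp [escapeCount]

lemma escapeCount_add_le (δ : Finset G) (a b : G) :
    escapeCount δ (a + b) ≤ escapeCount δ a + escapeCount δ b := by
  have hsub : {x ∈ δ | x + (a + b) ∉ δ} ⊆
      {x ∈ δ | x + a ∉ δ} ∪ {y ∈ δ | y + b ∉ δ}.image (· - a) := by
    intro x hx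
    simp only [mem_filter, mem_union, mem_image] at hx ⊢
    by_cases hxa : x + a ∈ δ
    · exact .inr ⟨x + a, ⟨hxa, by rw [add_assoc]; exact hx.2⟩, add_sub_cancel_right x a⟩
    · exact .inl ⟨hx.1, hxa⟩
  exact (card_le_card hsub).trans <| (card_union_le _ _).trans <| add_le_add le_rfl card_image_le

lemma escapeCount_neg (δ : Finset G) (a : G) : escapeCount δ (-a) = escapeCount δ a := by
  have hstay : #{x ∈ δ | x + -a ∈ δ} = #{x ∈ δ | x + a ∈ δ} :=
    card_nbij' (· + -a) (· + a) (fun x hx => by simp_all) (fun x hx => by simp_all)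
      (fun x _ => by simp) (fun x _ => by simp)
  have h₁ := card_filter_add_card_filter_not (s := δ) (fun x => x + -a ∈ δ)
  have h₂ := card_filter_add_card_filter_not (s := δ) (fun x => x + a ∈ δ)
  unfold escapeCount
  omega

lemma escapeCount_nsmul_le (δ : Finset G) (n : ℕ) (a : G) :
    escapeCount δ (n • a) ≤ n * escapeCount δ a := by
  induction n with
  | zero => simp
  | succ n ih =>
    rw [succ_nsmul, Nat.succ_mul]
    exact (escapeCount_add_le δ _ _).trans (by omega)

lemma escapeCount_zsmul_le (δ : Finset G) (k : ℤ) (a : G) :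
    escapeCount δ (k • a) ≤ k.natAbs * escapeCount δ a := by
  obtain ⟨n, rfl | rfl⟩ := Int.eq_nat_or_neg k
  · simpa using escapeCount_nsmul_le δ n a
  · simpa [neg_smul, escapeCount_neg] using escapeCount_nsmul_le δ n a

lemma ncard_pairs_sub_eq (δ : Finset G) (m : G) :
    {q : G × G | q.1 ∈ δ ∧ q.2 ∉ δ ∧ q.2 - q.1 = m}.ncard = escapeCount δ m := by
  have himage : {q : G × G | q.1 ∈ δ ∧ q.2 ∉ δ ∧ q.2 - q.1 = m} =
      (fun x => (x, x + m)) '' ↑{x ∈ δ | x + m ∉ δ} := by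
    ext ⟨x, y⟩
    simp only [Set.mem_ofPred_eq, Set.mem_image, coe_filter, Prod.mk.injEq, sub_eq_iff_eq_add']
    constructor
    · rintro ⟨hx, hy, rfl⟩
      exact ⟨x, ⟨hx, hy⟩, rfl, rfl⟩
    · rintro ⟨x, ⟨hx, hy⟩, rfl, rfl⟩
      exact ⟨hx, hy, rfl⟩
  rw [himage, Set.ncard_image_of_injective _ fun x y h => (Prod.mk.inj h).1, Set.ncard_coe_finset]
  rfl

lemma ncard_pairs_sub_eq_or_neg_le (δ : Finset G) (m : G) :
    {q : G × G | q.1 ∈ δ ∧ q.2 ∉ δ ∧ (q.2 - q.1 = m ∨ q.2 - q.1 = -m)}.ncard ≤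
      2 * escapeCount δ m := by
  have hunion : {q : G × G | q.1 ∈ δ ∧ q.2 ∉ δ ∧ (q.2 - q.1 = m ∨ q.2 - q.1 = -m)} =
      {q : G × G | q.1 ∈ δ ∧ q.2 ∉ δ ∧ q.2 - q.1 = m} ∪
        {q : G × G | q.1 ∈ δ ∧ q.2 ∉ δ ∧ q.2 - q.1 = -m} := by
    ext q
    simp only [Set.mem_ofPred_eq, Set.mem_union]
    tauto
  rw [hunion, two_mul]
  refine (Set.ncard_union_le _ _).trans_eq ?_
  rw [ncard_pairs_sub_eq, ncard_pairs_sub_eq, escapeCount_neg]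

end escapeCount

lemma escapeCount_le_natAbs (δ : Finset (ℤ × ℤ)) (n : ℤ × ℤ) :
    escapeCount δ n ≤ n.1.natAbs * escapeCount δ (1, 0) + n.2.natAbs * escapeCount δ (0, 1) := by
  have hn : n = n.1 • ((1 : ℤ), (0 : ℤ)) + n.2 • ((0 : ℤ), (1 : ℤ)) := by
    ext <;> simp
  calc escapeCount δ n = escapeCount δ (n.1 • ((1 : ℤ), (0 : ℤ)) + n.2 • ((0 : ℤ), (1 : ℤ))) :=
        congrArg _ hn
    _ ≤ _ := (escapeCount_add_le δ _ _).trans <|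
        add_le_add (escapeCount_zsmul_le δ _ _) (escapeCount_zsmul_le δ _ _)

lemma ncard_pairs_le_natAbs (δ : Finset (ℤ × ℤ)) (n : ℤ × ℤ) :
    {q : (ℤ × ℤ) × (ℤ × ℤ) | q.1 ∈ δ ∧ q.2 ∉ δ ∧ (q.2 - q.1 = n ∨ q.2 - q.1 = -n)}.ncard ≤
      2 * escapeCount δ (1, 0) * n.1.natAbs + 2 * escapeCount δ (0, 1) * n.2.natAbs := by
  have := (ncard_pairs_sub_eq_or_neg_le δ n).trans
    (Nat.mul_le_mul_left 2 (escapeCount_le_natAbs δ n))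
  linarith

lemma card_boundary_eq (δ : Finset (ℤ × ℤ)) :
    #{x ∈ δ | x + (1, 0) ∉ δ} + #{x ∈ δ | x - (1, 0) ∉ δ}
      + #{x ∈ δ | x + (0, 1) ∉ δ} + #{x ∈ δ | x - (0, 1) ∉ δ}
      = 2 * escapeCount δ (1, 0) + 2 * escapeCount δ (0, 1) := by
  simp only [sub_eq_add_neg]
  change escapeCount δ _ + escapeCount δ (-_) + escapeCount δ _ + escapeCount δ (-_) = _
  rw [escapeCount_neg, escapeCount_neg]
  ring

lemma tsum_le_of_le_of_hasSum {ι : Type*} {f g : ι → ℝ} {b : ℝ} (hf : ∀ i, 0 ≤ f i)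
    (hfg : ∀ i, f i ≤ g i) (hg : HasSum g b) : ∑' i, f i ≤ b :=
  hasSum_le hfg (hg.summable.of_nonneg_of_le hf hfg).hasSum hg

theorem HasSum.int_prod_of_pnat_prod {β M : Type*} [AddCommMonoid M] [TopologicalSpace M]
    [ContinuousAdd M] {f : ℤ × β → M} {a : M}
    (hf : HasSum (fun y : ℕ+ × β => f (y.1, y.2)) a)
    (hf_neg : ∀ k b, f (-k, b) = f (k, b)) (hf_zero : ∀ b, f (0, b) = 0) :
    HasSum f (a + a) := by
  set pos : ℕ+ × β → ℤ × β := fun y => (y.1, y.2)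
  set neg : ℕ+ × β → ℤ × β := fun y => (-y.1, y.2)
  have hpos : Function.Injective pos := fun y y' h => by simpa [pos, Prod.ext_iff] using h
  have hneg : Function.Injective neg := fun y y' h => by simpa [neg, Prod.ext_iff] using h
  have hdisj : Disjoint (Set.range pos) (Set.range neg) := by
    rw [Set.disjoint_left]
    rintro _ ⟨y, rfl⟩ ⟨y', h⟩
    have := congrArg Prod.fst h
    simp only [pos, neg] at this
    have := y.1.pos
    have := y'.1.pos
    omega
  have hsupp : Function.support f ⊆ Set.range pos ∪ Set.range neg := by
    rintro ⟨k, b⟩ hkb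
    have hk : 0 < k.natAbs := Int.natAbs_pos.mpr (by rintro rfl; exact hkb (hf_zero b))
    rcases Int.natAbs_eq k with h | h
    · exact .inl ⟨(⟨k.natAbs, hk⟩, b), Prod.ext h.symm rfl⟩
    · exact .inr ⟨(⟨k.natAbs, hk⟩, b), Prod.ext h.symm rfl⟩
  have hf' : HasSum (f ∘ neg) a := by
    simpa only [Function.comp_def, neg, hf_neg] using hf
  exact (hasSum_subtype_iff_of_support_subset hsupp).mp <|
    (hpos.hasSum_range_iff.mpr hf).add_disjoint hdisj (hneg.hasSum_range_iff.mpr hf')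

lemma summable_natAbs_fst_div_rpow {p : ℝ} (hp : 3 < p) :
    Summable fun n : ℤ × ℤ => (n.1.natAbs : ℝ) / ((n.1 : ℝ) ^ 2 + (n.2 : ℝ) ^ 2) ^ (p / 2) := by
  have hnorm : Summable fun n : ℤ × ℤ => ‖n‖ ^ (-(p - 1)) := by
    have := EisensteinSeries.summable_one_div_norm_rpow (k := p - 1) (by linarith)
    rw [← (finTwoArrowEquiv ℤ).symm.summable_iff] at this
    refine this.congr fun n => ?_
    simp [EisensteinSeries.norm_eq_max_natAbs, Prod.norm_def, Int.norm_eq_abs, Nat.cast_natAbs]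
  refine hnorm.of_nonneg_of_le (fun n => by positivity) fun n => ?_
  rcases eq_or_ne n 0 with rfl | hn
  · simp only [Prod.fst_zero, Int.natAbs_zero, Nat.cast_zero, zero_div]; positivity
  set r := ‖n‖
  have hr : 0 < r := norm_pos_iff.mpr hn
  have hr_eq : r = max |(n.1 : ℝ)| |(n.2 : ℝ)| := by simp [r, Prod.norm_def, Int.norm_eq_abs]
  have hfst : (n.1.natAbs : ℝ) ≤ r := by
    rw [hr_eq, Nat.cast_natAbs, Int.cast_abs]; exact le_max_left _ _
  have hsq : r ^ 2 ≤ (n.1 : ℝ) ^ 2 + (n.2 : ℝ) ^ 2 := by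
    rcases max_choice |(n.1 : ℝ)| |(n.2 : ℝ)| with h | h <;> rw [hr_eq, h, sq_abs] <;>
      nlinarith [sq_nonneg (n.1 : ℝ), sq_nonneg (n.2 : ℝ)]
  have hpow : r ^ p ≤ ((n.1 : ℝ) ^ 2 + (n.2 : ℝ) ^ 2) ^ (p / 2) := by
    calc r ^ p = (r ^ 2) ^ (p / 2) := by
          rw [← Real.rpow_two, ← Real.rpow_mul hr.le]; ring_nf
      _ ≤ _ := by gcongr
  calc (n.1.natAbs : ℝ) / ((n.1 : ℝ) ^ 2 + (n.2 : ℝ) ^ 2) ^ (p / 2) ≤ r / r ^ p := by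
        gcongr
    _ = r ^ (-(p - 1)) := by
        rw [Real.rpow_neg hr.le, Real.rpow_sub_one hr.ne', inv_div]

lemma hasSum_natAbs_fst_div_rpow {p : ℝ} (hp : 3 < p) :
    HasSum (fun n : ℤ × ℤ => (n.1.natAbs : ℝ) / ((n.1 : ℝ) ^ 2 + (n.2 : ℝ) ^ 2) ^ (p / 2))
      (2 * ∑' y : ℕ+ × ℤ, (y.1 : ℝ) / ((y.1 : ℝ) ^ 2 + (y.2 : ℝ) ^ 2) ^ (p / 2)) := by
  have hhalf : Summable fun y : ℕ+ × ℤ => (y.1 : ℝ) / ((y.1 : ℝ) ^ 2 + (y.2 : ℝ) ^ 2) ^ (p / 2) :=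
    ((summable_natAbs_fst_div_rpow hp).comp_injective (i := fun y : ℕ+ × ℤ => ((y.1 : ℤ), y.2))
      fun y y' h => by simpa [Prod.ext_iff] using h).congr fun y => by simp
  rw [two_mul]
  exact HasSum.int_prod_of_pnat_prod (by simpa using hhalf.hasSum)
    (fun k b => by simp) (fun b => by simp)

lemma hasSum_natAbs_div_rpow_of_ne_zero {p : ℝ} (hp : 3 < p) (a b : ℝ) :
    HasSum (fun n : {n : ℤ × ℤ // n ≠ 0} => (a * (n.1.1.natAbs : ℝ) + b * (n.1.2.natAbs : ℝ)) /
        ((n.1.1 : ℝ) ^ 2 + (n.1.2 : ℝ) ^ 2) ^ (p / 2))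
      ((a + b) * (2 * ∑' y : ℕ+ × ℤ, (y.1 : ℝ) / ((y.1 : ℝ) ^ 2 + (y.2 : ℝ) ^ 2) ^ (p / 2))) := by
  have hsnd : HasSum
      (fun n : ℤ × ℤ => (n.2.natAbs : ℝ) / ((n.1 : ℝ) ^ 2 + (n.2 : ℝ) ^ 2) ^ (p / 2)) _ :=
    (Equiv.prodComm ℤ ℤ).hasSum_iff.mp <|
      (hasSum_natAbs_fst_div_rpow hp).congr_fun fun n => by simp [add_comm]
  have hall := ((hasSum_natAbs_fst_div_rpow hp).mul_left a).add (hsnd.mul_left b)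
  rw [← add_mul] at hall
  refine (hasSum_subtype_iff_of_support_subset (s := {n | n ≠ 0}) ?_).mpr hall |>.congr_fun ?_
  · rintro n hn rfl
    simp at hn
  · intro n
    simp only [Function.comp_apply]
    ring

theorem stmt_15_general (p : ℝ) (hp : 4 < p) (δ : Finset (ℤ × ℤ)) :
    (-∑' n : {n : ℤ × ℤ // n ≠ 0},
        (({q : (ℤ × ℤ) × (ℤ × ℤ) |
            q.1 ∈ δ ∧ q.2 ∉ δ ∧ (q.2 - q.1 = (n : ℤ × ℤ) ∨ q.2 - q.1 = -(n : ℤ × ℤ))}.ncard : ℝ))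
          / ((((n : ℤ × ℤ).1 : ℝ) ^ 2 + ((n : ℤ × ℤ).2 : ℝ) ^ 2) ^ (p / 2)))
      ≥ -2 * (∑' y : ℕ+ × ℤ, (y.1 : ℝ) / (((y.1 : ℝ) ^ 2 + (y.2 : ℝ) ^ 2) ^ (p / 2)))
          * (((δ.filter (fun x => x + (1, 0) ∉ δ)).card
            + (δ.filter (fun x => x - (1, 0) ∉ δ)).card
            + (δ.filter (fun x => x + (0, 1) ∉ δ)).card
            + (δ.filter (fun x => x - (0, 1) ∉ δ)).card : ℕ) : ℝ) := by
  rw [card_boundary_eq, ge_iff_le, neg_mul, neg_mul, neg_le_neg_iff]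
  refine tsum_le_of_le_of_hasSum (fun n => by positivity) (fun n => ?_)
    (hasSum_natAbs_div_rpow_of_ne_zero (by linarith) (2 * escapeCount δ (1, 0))
      (2 * escapeCount δ (0, 1))) |>.trans_eq ?_
  · gcongr
    exact_mod_cast ncard_pairs_le_natAbs δ n
  · push_cast
    ring

/-- For finite nonempty `δ ⊂ ℤ²` and `p > 4`, the self-energy
`U(δ) = -∑_{n≠0} 𝒩_n(δ)/|n|^p` satisfies `U(δ) ≥ -2 J_c |Γ(δ)|`, where `|Γ(δ)|`
is the number of nearest-neighbor boundary bonds of `δ` and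
`J_c = ∑_{n₁>0, n₂∈ℤ} n₁/(n₁²+n₂²)^{p/2}`. -/
theorem stmt_15 (p : ℝ) (hp : 4 < p) (δ : Finset (ℤ × ℤ)) (hδ : δ.Nonempty) :
    (-∑' n : {n : ℤ × ℤ // n ≠ 0},
        (({q : (ℤ × ℤ) × (ℤ × ℤ) |
            q.1 ∈ δ ∧ q.2 ∉ δ ∧ (q.2 - q.1 = (n : ℤ × ℤ) ∨ q.2 - q.1 = -(n : ℤ × ℤ))}.ncard : ℝ))
          / ((((n : ℤ × ℤ).1 : ℝ) ^ 2 + ((n : ℤ × ℤ).2 : ℝ) ^ 2) ^ (p / 2)))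
      ≥ -2 * (∑' y : ℕ+ × ℤ, (y.1 : ℝ) / (((y.1 : ℝ) ^ 2 + (y.2 : ℝ) ^ 2) ^ (p / 2)))
          * (((δ.filter (fun x => x + (1, 0) ∉ δ)).card
            + (δ.filter (fun x => x - (1, 0) ∉ δ)).card
            + (δ.filter (fun x => x + (0, 1) ∉ δ)).card
            + (δ.filter (fun x => x - (0, 1) ∉ δ)).card : ℕ) : ℝ) :=
  stmt_15_general p hp δ
end

section
/- Let p > 4, τ < 0, C > 0, and let e_s : [1,∞) → ℝ satisfy e_s(h) = τ/h + A/h^{p-2} with A > 0. Then for ℓ ≥ (C')·|τ|^{-1/(p-3)} with C' large enough (depending on A, C, p), min over real h ∈ [1, ℓ] of [e_s(h) - C·h^{3-p}·ℓ^{-1}] ≥ (min over h > 0 of e_s(h))·(1 + c·ℓ^{-1}·|τ|^{-1/(p-3)}) for some constant c > 0 depending only on A, C, p; note both sides are negative. -/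
/-!
Rescaling `h = t x` with `t = |τ|^{-1/(p-3)}` multiplies `e_s` by `t^{2-p}` and turns it into the
`τ = -1` energy `f(x) = -1/x + A/x^{p-2}`; the correction becomes `t^{2-p} C s x^{3-p}` with
`s = t/ℓ`, so it suffices to prove `f(x) - C s x^{3-p} ≥ (inf f)(1 + c s)` for small `s`.
Where `x^{p-3} ≤ A/2` the repulsive term dominates both the attraction and the correction, so the
left side is `≥ 0`, while the right side is negative. Elsewhere the correction is at most
`2 C s / A`, which is exactly the shift `(inf f) c s` for `c = 2C / (A |inf f|)`.
-/

open Set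

noncomputable def stripeEnergy (τ A p h : ℝ) : ℝ := τ / h + A / h ^ (p - 2)

section Scaling

variable {A p t : ℝ}

lemma stripeEnergy_neg_one_eq {x : ℝ} (hx : 0 < x) :
    stripeEnergy (-1) A p x = (A - x ^ (p - 3)) / x ^ (p - 2) := by
  have hsplit : x ^ (p - 2) = x ^ (p - 3) * x := by
    rw [show p - 2 = (p - 3) + 1 by ring, Real.rpow_add hx, Real.rpow_one]
  have : 0 < x ^ (p - 3) := by positivity
  rw [stripeEnergy, hsplit]
  field_simp
  ring

lemma stripeEnergy_scale (ht : 0 < t) {x : ℝ} (hx : 0 < x) :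
    stripeEnergy (-t ^ (3 - p)) A p (t * x) = t ^ (2 - p) * stripeEnergy (-1) A p x := by
  have h3 : t ^ (3 - p) = t ^ (2 - p) * t := by
    rw [show 3 - p = (2 - p) + 1 by ring, Real.rpow_add ht, Real.rpow_one]
  have h2 : (t * x) ^ (p - 2) = (t ^ (2 - p))⁻¹ * x ^ (p - 2) := by
    rw [Real.mul_rpow ht.le hx.le, ← Real.rpow_neg ht.le, neg_sub]
  have : 0 < t ^ (2 - p) := by positivity
  have : 0 < x ^ (p - 2) := by positivity
  rw [stripeEnergy, stripeEnergy, h3, h2]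
  field_simp

lemma stripeEnergy_sub_correction_scale (ht : 0 < t) {x : ℝ} (hx : 0 < x) (C ℓ : ℝ) :
    stripeEnergy (-t ^ (3 - p)) A p (t * x) - C * (t * x) ^ (3 - p) / ℓ
      = t ^ (2 - p) * (stripeEnergy (-1) A p x - C * (t / ℓ) * x ^ (3 - p)) := by
  have h3 : t ^ (3 - p) = t ^ (2 - p) * t := by
    rw [show 3 - p = (2 - p) + 1 by ring, Real.rpow_add ht, Real.rpow_one]
  rw [stripeEnergy_scale ht hx, Real.mul_rpow ht.le hx.le, h3]
  ring

lemma iInf_stripeEnergy_scale (ht : 0 < t) :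
    ⨅ h : Ioi (0 : ℝ), stripeEnergy (-t ^ (3 - p)) A p h
      = t ^ (2 - p) * ⨅ x : Ioi (0 : ℝ), stripeEnergy (-1) A p x := by
  let dilate : Ioi (0 : ℝ) → Ioi (0 : ℝ) := fun x => ⟨t * x, mul_pos ht x.2⟩
  have hdilate : Function.Surjective dilate := fun h =>
    ⟨⟨h / t, div_pos h.2 ht⟩, Subtype.ext (mul_div_cancel₀ _ ht.ne')⟩
  rw [← hdilate.iInf_comp, Real.mul_iInf_of_nonneg (by positivity)]
  exact iInf_congr fun x => stripeEnergy_scale ht x.2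

end Scaling

section UnitEnergy

variable {A p : ℝ}

lemma bddBelow_stripeEnergy_neg_one (hp : 3 < p) (hA : 0 < A) :
    BddBelow (range fun x : Ioi (0 : ℝ) => stripeEnergy (-1) A p x) := by
  set x₀ := A ^ (p - 3)⁻¹
  have hx₀ : 0 < x₀ := by positivity
  refine ⟨-x₀⁻¹, ?_⟩
  rintro _ ⟨⟨x, hx : 0 < x⟩, rfl⟩
  rcases le_total (x ^ (p - 3)) A with hsmall | hlarge
  · have : 0 ≤ stripeEnergy (-1) A p x := by
      rw [stripeEnergy_neg_one_eq hx]
      exact div_nonneg (by linarith) (by positivity)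
    dsimp only
    linarith [inv_pos.2 hx₀]
  · have hxx₀ : x₀ ≤ x := (Real.rpow_inv_le_iff_of_pos hA.le hx.le (by linarith)).2 hlarge
    have : -x₀⁻¹ ≤ -1 / x := by
      rw [neg_div, one_div, neg_le_neg_iff]
      exact inv_anti₀ hx₀ hxx₀
    simp only [stripeEnergy]
    linarith [div_nonneg hA.le (Real.rpow_pos_of_pos hx (p - 2)).le]

lemma iInf_stripeEnergy_neg_one_neg (hp : 3 < p) (hA : 0 < A) :
    ⨅ x : Ioi (0 : ℝ), stripeEnergy (-1) A p x < 0 := by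
  set x₁ := (2 * A) ^ (p - 3)⁻¹
  have hx₁ : 0 < x₁ := by positivity
  have hx₁p : x₁ ^ (p - 3) = 2 * A := Real.rpow_inv_rpow (by positivity) (by linarith)
  refine (ciInf_le (bddBelow_stripeEnergy_neg_one hp hA) ⟨x₁, hx₁⟩).trans_lt ?_
  rw [stripeEnergy_neg_one_eq hx₁, hx₁p]
  exact div_neg_of_neg_of_pos (by linarith) (by positivity)

end UnitEnergy

section Correction

variable {A p C s x : ℝ}

lemma stripeEnergy_neg_one_sub_correction_nonneg (hx : 0 < x) (hsmall : x ^ (p - 3) ≤ A / 2)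
    (hcorr : C * s * x ≤ A / 2) : 0 ≤ stripeEnergy (-1) A p x - C * s * x ^ (3 - p) := by
  have hx3 : x ^ (3 - p) = x / x ^ (p - 2) := by
    rw [show 3 - p = 1 - (p - 2) by ring, Real.rpow_sub hx, Real.rpow_one]
  rw [stripeEnergy_neg_one_eq hx, hx3, mul_div_assoc', ← sub_div]
  exact div_nonneg (by linarith) (by positivity)

lemma exists_stripeEnergy_neg_one_sub_correction_ge (hp : 3 < p) (hA : 0 < A) (hC : 0 < C) :
    ∃ s₀ > 0, ∃ c > 0, ∀ s ∈ Ioc 0 s₀, ∀ x : ℝ, 0 < x →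
      (⨅ y : Ioi (0 : ℝ), stripeEnergy (-1) A p y) * (1 + c * s)
        ≤ stripeEnergy (-1) A p x - C * s * x ^ (3 - p) := by
  set m := ⨅ y : Ioi (0 : ℝ), stripeEnergy (-1) A p y
  have hm : m < 0 := iInf_stripeEnergy_neg_one_neg hp hA
  set D := (A / 2) ^ (p - 3)⁻¹
  have hD : 0 < D := by positivity
  have hc : 0 < 2 * C / (A * -m) := div_pos (by positivity) (mul_pos hA (neg_pos.2 hm))
  refine ⟨A / (2 * C * D), by positivity, _, hc, fun s ⟨hs, hss₀⟩ x hx => ?_⟩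
  rcases le_total x D with hsmall | hlarge
  · have hcorr : C * s * x ≤ A / 2 := by
      rw [le_div_iff₀ (by positivity)] at hss₀
      nlinarith
    have hshift : m * (1 + 2 * C / (A * -m) * s) ≤ 0 :=
      mul_nonpos_of_nonpos_of_nonneg hm.le (by nlinarith)
    exact hshift.trans (stripeEnergy_neg_one_sub_correction_nonneg hx
      ((Real.le_rpow_inv_iff_of_pos hx.le (by positivity) (by linarith)).1 hsmall) hcorr)
  · have hx3 : x ^ (3 - p) ≤ 2 / A := by
      rw [show 3 - p = -(p - 3) by ring, Real.rpow_neg hx.le, ← inv_div]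
      exact inv_anti₀ (by positivity)
        ((Real.rpow_inv_le_iff_of_pos (by positivity) hx.le (by linarith)).1 hlarge)
    have hshift : m * (1 + 2 * C / (A * -m) * s) = m - C * s * (2 / A) := by
      field_simp [hm.ne]
      ring
    have hmin : m ≤ stripeEnergy (-1) A p x :=
      ciInf_le (bddBelow_stripeEnergy_neg_one hp hA) ⟨x, hx⟩
    rw [hshift]
    nlinarith [mul_le_mul_of_nonneg_left hx3 (mul_pos hC hs).le]

end Correction

/-- For `p > 4`, `A > 0`, `C > 0` there are `C' > 0` (large) and `c > 0` such
that for all `τ < 0` and all `ℓ ≥ C'|τ|^{-1/(p-3)}`, every `h ∈ [1,ℓ]` satisfies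
`e_s(h) - C h^{3-p}/ℓ ≥ (min_{h>0} e_s)(1 + c ℓ^{-1}|τ|^{-1/(p-3)})`, where
`e_s(h) = τ/h + A/h^{p-2}`. -/
theorem stmt_16 (p A C : ℝ) (hp : 4 < p) (hA : 0 < A) (hC : 0 < C) :
    ∃ C' : ℝ, 0 < C' ∧ ∃ c : ℝ, 0 < c ∧ ∀ τ : ℝ, τ < 0 →
      ∀ ℓ : ℝ, C' * |τ| ^ (-(1 / (p - 3))) ≤ ℓ →
        ∀ h : ℝ, h ∈ Set.Icc (1 : ℝ) ℓ →
          (τ / h + A / h ^ (p - 2)) - C * h ^ (3 - p) / ℓ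
            ≥ (⨅ h' : Set.Ioi (0 : ℝ), (τ / (h' : ℝ) + A / (h' : ℝ) ^ (p - 2)))
              * (1 + c * ℓ⁻¹ * |τ| ^ (-(1 / (p - 3)))) := by
  obtain ⟨s₀, hs₀, c, hc, hunit⟩ :=
    exists_stripeEnergy_neg_one_sub_correction_ge (by linarith : 3 < p) hA hC
  refine ⟨s₀⁻¹, inv_pos.2 hs₀, c, hc, fun τ hτ ℓ hℓ h ⟨h1, _⟩ => ?_⟩
  set t := |τ| ^ (-(1 / (p - 3)))
  have ht : 0 < t := Real.rpow_pos_of_pos (abs_pos.2 hτ.ne) _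
  have hτt : τ = -t ^ (3 - p) := by
    rw [← Real.rpow_mul (abs_nonneg τ), show -(1 / (p - 3)) * (3 - p) = 1 by
      field_simp [(by linarith : p - 3 ≠ 0)]; ring, Real.rpow_one, abs_of_neg hτ, neg_neg]
  have hℓ0 : 0 < ℓ := (mul_pos (inv_pos.2 hs₀) ht).trans_le hℓ
  have hs : t / ℓ ∈ Ioc 0 s₀ :=
    ⟨div_pos ht hℓ0, (div_le_iff₀ hℓ0).2 ((inv_mul_le_iff₀ hs₀).1 hℓ)⟩
  have key := mul_le_mul_of_nonneg_left (hunit _ hs (h / t) (by positivity))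
    (Real.rpow_pos_of_pos ht (2 - p)).le
  rw [← mul_assoc, ← iInf_stripeEnergy_scale ht, ← stripeEnergy_sub_correction_scale ht
    (by positivity), mul_div_cancel₀ _ ht.ne', ← hτt] at key
  show (⨅ h' : Ioi (0 : ℝ), stripeEnergy τ A p h') * (1 + c * ℓ⁻¹ * t)
    ≤ stripeEnergy τ A p h - C * h ^ (3 - p) / ℓ
  rwa [mul_assoc c, inv_mul_eq_div]
end
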